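/- Define d(x,y,z) as the exact signed quantity (p − f(u,v))·n(u,v) where f(u,v) = (u, v, ½(au² + cv² + 2buv)), n(u,v) = (−(au+bv), −(bu+cv), 1)/√(1+(au+bv)²+(bu+cv)²), p = (x,y,z), and (u,v) = (x,y) (zeroth-order closest-point approximation). Then d(x,y,z) = (z − ½(ax² + cy² + 2bxy))/√(1+(ax+by)²+(bx+cy)²), and hence there is a constant C(a,b,c) such that |d(x,y,z) − (z − ½(ax²+cy²+2bxy))| ≤ C(a,b,c)·(|x|+|y|+|z|)³ in a neighborhood of the origin. -/

import Mathlib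

open Matrix

/-- The quadratic patch f(u,v) = (u, v, ½(au² + cv² + 2buv)). -/
noncomputable def fpatch (a b c u v : ℝ) : Fin 3 → ℝ :=
  ![u, v, (1 / 2) * (a * u ^ 2 + c * v ^ 2 + 2 * b * u * v)]

/-- The unit normal of the quadratic patch at parameters (u,v). -/
noncomputable def npatch (a b c u v : ℝ) : Fin 3 → ℝ :=
  (1 / Real.sqrt (1 + (a * u + b * v) ^ 2 + (b * u + c * v) ^ 2)) •
    ![-(a * u + b * v), -(b * u + c * v), 1]

/-- Signed distance with the zeroth-order closest-point approximation (u,v) = (x,y). -/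
noncomputable def dApprox (a b c x y z : ℝ) : ℝ :=
  (![x, y, z] - fpatch a b c x y) ⬝ᵥ npatch a b c x y

theorem stmt_12 (a b c : ℝ) :
    (∀ x y z : ℝ, dApprox a b c x y z =
      (z - (1 / 2) * (a * x ^ 2 + c * y ^ 2 + 2 * b * x * y)) /
        Real.sqrt (1 + (a * x + b * y) ^ 2 + (b * x + c * y) ^ 2)) ∧
    (∃ C > (0 : ℝ), ∃ δ > (0 : ℝ), ∀ x y z : ℝ, |x| < δ → |y| < δ → |z| < δ →
      |dApprox a b c x y z - (z - (1 / 2) * (a * x ^ 2 + c * y ^ 2 + 2 * b * x * y))|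
        ≤ C * (|x| + |y| + |z|) ^ 3) := by
  have h1 : ∀ x y z : ℝ, dApprox a b c x y z =
      (z - (1 / 2) * (a * x ^ 2 + c * y ^ 2 + 2 * b * x * y)) /
        Real.sqrt (1 + (a * x + b * y) ^ 2 + (b * x + c * y) ^ 2) := by
    intro x y z
    unfold dApprox fpatch npatch
    simp [dotProduct, Fin.sum_univ_three, Matrix.smul_cons]
    ring
  refine ⟨h1, ?_⟩
  obtain ⟨K, hK⟩ : ∃ K : ℝ, K = |a| + |b| + |c| := ⟨_, rfl⟩
  have hK0 : 0 ≤ K := by rw [hK]; positivity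
  obtain ⟨M, hM⟩ : ∃ M : ℝ, M = ((|a| + |b|) ^ 2 + (|b| + |c|) ^ 2) / 2 := ⟨_, rfl⟩
  have hM0 : 0 ≤ M := by rw [hM]; positivity
  refine ⟨(1 + 3 * K) * M + 1, by positivity, 1, one_pos, ?_⟩
  intro x y z hx hy hz
  obtain ⟨q, hq⟩ : ∃ q : ℝ, q = (1 / 2) * (a * x ^ 2 + c * y ^ 2 + 2 * b * x * y) := ⟨_, rfl⟩
  obtain ⟨A, hA⟩ : ∃ A : ℝ, A = a * x + b * y := ⟨_, rfl⟩
  obtain ⟨B, hB⟩ : ∃ B : ℝ, B = b * x + c * y := ⟨_, rfl⟩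
  obtain ⟨S, hS⟩ : ∃ S : ℝ, S = 1 + A ^ 2 + B ^ 2 := ⟨_, rfl⟩
  obtain ⟨r, hr⟩ : ∃ r : ℝ, r = |x| + |y| + |z| := ⟨_, rfl⟩
  rw [← hq, ← hr]
  have hS1 : (1 : ℝ) ≤ S := by nlinarith [sq_nonneg A, sq_nonneg B]
  have hsqrt1 : (1 : ℝ) ≤ Real.sqrt S := by
    rw [show (1:ℝ) = Real.sqrt 1 by simp]
    exact Real.sqrt_le_sqrt hS1
  have hsqrtpos : 0 < Real.sqrt S := lt_of_lt_of_le one_pos hsqrt1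
  have hsqrt2 : Real.sqrt S ≤ (S + 1) / 2 := by
    rw [show (S + 1) / 2 = Real.sqrt (((S+1)/2)^2) by
      rw [Real.sqrt_sq (by linarith)]]
    apply Real.sqrt_le_sqrt
    nlinarith [sq_nonneg (S - 1)]
  have key : dApprox a b c x y z - (z - q) = (z - q) * (1 - Real.sqrt S) / Real.sqrt S := by
    rw [h1 x y z,
      show (1 + (a * x + b * y) ^ 2 + (b * x + c * y) ^ 2) = S by rw [hS, hA, hB], ← hq]
    field_simp
  rw [key, abs_div, abs_mul, abs_of_pos hsqrtpos]
  have habs : |1 - Real.sqrt S| = Real.sqrt S - 1 := by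
    rw [abs_sub_comm, abs_of_nonneg (by linarith)]
  rw [habs]
  have hax := abs_nonneg x
  have hay := abs_nonneg y
  have haz := abs_nonneg z
  have hr0 : 0 ≤ r := by rw [hr]; positivity
  have hr3 : r < 3 := by rw [hr]; linarith
  have hxr : |x| ≤ r := by rw [hr]; linarith
  have hyr : |y| ≤ r := by rw [hr]; linarith
  have hzr : |z| ≤ r := by rw [hr]; linarith
  -- bound |z - q|
  have hq1 : |z - q| ≤ r + K * r ^ 2 := by
    have h2 : |z - q| ≤ |z| + |q| := abs_sub _ _
    have h3 : |q| ≤ (1/2) * (|a| * x^2 + |c| * y^2 + 2 * |b| * |x| * |y|) := by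
      rw [hq, abs_mul, abs_of_nonneg (by norm_num : (0:ℝ) ≤ 1/2)]
      have t1 := abs_add_le (a * x ^ 2 + c * y ^ 2) (2 * b * x * y)
      have t2 := abs_add_le (a * x ^ 2) (c * y ^ 2)
      have e1 : |a * x ^ 2| = |a| * x ^ 2 := by rw [abs_mul, abs_pow, sq_abs]
      have e2 : |c * y ^ 2| = |c| * y ^ 2 := by rw [abs_mul, abs_pow, sq_abs]
      have e3 : |2 * b * x * y| = 2 * |b| * |x| * |y| := by
        rw [abs_mul, abs_mul, abs_mul]; norm_num
      linarith
    have hx2 : x ^ 2 ≤ r ^ 2 := by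
      calc x ^ 2 = |x| ^ 2 := (sq_abs x).symm
        _ ≤ r ^ 2 := pow_le_pow_left₀ hax hxr 2
    have hy2 : y ^ 2 ≤ r ^ 2 := by
      calc y ^ 2 = |y| ^ 2 := (sq_abs y).symm
        _ ≤ r ^ 2 := pow_le_pow_left₀ hay hyr 2
    have hxy : |x| * |y| ≤ r ^ 2 := by
      calc |x| * |y| ≤ r * r := mul_le_mul hxr hyr hay hr0
        _ = r ^ 2 := by ring
    have m1 : |a| * x ^ 2 ≤ |a| * r ^ 2 := mul_le_mul_of_nonneg_left hx2 (abs_nonneg a)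
    have m2 : |c| * y ^ 2 ≤ |c| * r ^ 2 := mul_le_mul_of_nonneg_left hy2 (abs_nonneg c)
    have m3 : |b| * (|x| * |y|) ≤ |b| * r ^ 2 := mul_le_mul_of_nonneg_left hxy (abs_nonneg b)
    have hqK : |q| ≤ K * r ^ 2 := by
      have e : K * r ^ 2 = |a| * r ^ 2 + |b| * r ^ 2 + |c| * r ^ 2 := by rw [hK]; ring
      have e2 : 2 * |b| * |x| * |y| = 2 * (|b| * (|x| * |y|)) := by ring
      rw [e]
      linarith [h3, m1, m2, m3, e2.le, e2.ge,
        mul_nonneg (abs_nonneg a) (sq_nonneg r), mul_nonneg (abs_nonneg c) (sq_nonneg r)]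
    linarith
  -- bound A² + B²
  have hAB : A ^ 2 + B ^ 2 ≤ 2 * M * r ^ 2 := by
    have hA1 : |A| ≤ (|a| + |b|) * r := by
      rw [hA]
      calc |a * x + b * y| ≤ |a * x| + |b * y| := abs_add_le _ _
        _ = |a| * |x| + |b| * |y| := by rw [abs_mul, abs_mul]
        _ ≤ (|a| + |b|) * r := by
            have n1 : |a| * |x| ≤ |a| * r := mul_le_mul_of_nonneg_left hxr (abs_nonneg a)
            have n2 : |b| * |y| ≤ |b| * r := mul_le_mul_of_nonneg_left hyr (abs_nonneg b)
            linarith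
    have hB1 : |B| ≤ (|b| + |c|) * r := by
      rw [hB]
      calc |b * x + c * y| ≤ |b * x| + |c * y| := abs_add_le _ _
        _ = |b| * |x| + |c| * |y| := by rw [abs_mul, abs_mul]
        _ ≤ (|b| + |c|) * r := by
            have n1 : |b| * |x| ≤ |b| * r := mul_le_mul_of_nonneg_left hxr (abs_nonneg b)
            have n2 : |c| * |y| ≤ |c| * r := mul_le_mul_of_nonneg_left hyr (abs_nonneg c)
            linarith
    have hA2 : A ^ 2 ≤ ((|a| + |b|) * r) ^ 2 := by
      calc A ^ 2 = |A| ^ 2 := (sq_abs A).symm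
        _ ≤ ((|a| + |b|) * r) ^ 2 := pow_le_pow_left₀ (abs_nonneg A) hA1 2
    have hB2 : B ^ 2 ≤ ((|b| + |c|) * r) ^ 2 := by
      calc B ^ 2 = |B| ^ 2 := (sq_abs B).symm
        _ ≤ ((|b| + |c|) * r) ^ 2 := pow_le_pow_left₀ (abs_nonneg B) hB1 2
    have e : 2 * (((|a| + |b|) ^ 2 + (|b| + |c|) ^ 2) / 2) * r ^ 2
        = ((|a| + |b|) * r) ^ 2 + ((|b| + |c|) * r) ^ 2 := by ring
    rw [hM, e]; linarith
  have hfrac : (Real.sqrt S - 1) / Real.sqrt S ≤ (A ^ 2 + B ^ 2) / 2 := by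
    have h4 : (Real.sqrt S - 1) / Real.sqrt S ≤ Real.sqrt S - 1 :=
      div_le_self (by linarith) hsqrt1
    have h5 : Real.sqrt S - 1 ≤ (S - 1) / 2 := by linarith
    have h6 : (S - 1) / 2 = (A ^ 2 + B ^ 2) / 2 := by rw [hS]; ring
    linarith
  have habs0 : 0 ≤ |z - q| := abs_nonneg _
  have hfrac0 : 0 ≤ (Real.sqrt S - 1) / Real.sqrt S :=
    div_nonneg (by linarith) hsqrtpos.le
  calc |z - q| * (Real.sqrt S - 1) / Real.sqrt S
      = |z - q| * ((Real.sqrt S - 1) / Real.sqrt S) := by ring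
    _ ≤ (r + K * r ^ 2) * ((A ^ 2 + B ^ 2) / 2) := by
        apply mul_le_mul hq1 hfrac hfrac0 (by positivity)
    _ ≤ (r + K * r ^ 2) * (M * r ^ 2) := by
        have := mul_nonneg hK0 (sq_nonneg r)
        apply mul_le_mul_of_nonneg_left (by linarith) (by linarith)
    _ = M * r ^ 3 + K * M * r ^ 4 := by ring
    _ ≤ ((1 + 3 * K) * M + 1) * r ^ 3 := by
        have h7 : r ^ 4 ≤ 3 * r ^ 3 := by
          have h9 := mul_le_mul_of_nonneg_left hr3.le (pow_nonneg hr0 3)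
          calc r ^ 4 = r ^ 3 * r := by ring
            _ ≤ r ^ 3 * 3 := h9
            _ = 3 * r ^ 3 := by ring
        have h8 : K * M * r ^ 4 ≤ K * M * (3 * r ^ 3) :=
          mul_le_mul_of_nonneg_left h7 (mul_nonneg hK0 hM0)
        have e9 : ((1 + 3 * K) * M + 1) * r ^ 3 = M * r ^ 3 + K * M * (3 * r ^ 3) + r ^ 3 := by
          ring
        linarith [h8, pow_nonneg hr0 3, e9.le, e9.ge]
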